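/- Let c>0, Δ>0, D={(x,y): x²+y²<c²Δ²}, u(x,y)=c²Δ²−x²−y², and for μ>0 let p_μ(x,y) = (μ/(2πc)) e^{−μΔ+(μ/c)√(u(x,y))}/√(u(x,y)). Then for every λ>0, (1/h²) ∬_D (√(p_{λ+h}(x,y)) − √(p_λ(x,y)))² dx dy → I(λ)/4 as h→0, where I(λ) = (1/λ²)(1 − e^{−λΔ}(1+λ²Δ²)) is the Fisher information of one observation. -/

import Mathlib

open MeasureTheory Real

/-- The absolutely continuous density of a planar random flight at time step `Δ`,
speed `c` and Poisson rate `μ`, evaluated at the point `q` of the open disc of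
radius `cΔ`. -/
noncomputable def prfDensity (c Δ μ : ℝ) (q : ℝ × ℝ) : ℝ :=
  μ / (2 * π * c) *
    Real.exp (-μ * Δ + μ / c * Real.sqrt (c ^ 2 * Δ ^ 2 - q.1 ^ 2 - q.2 ^ 2)) /
      Real.sqrt (c ^ 2 * Δ ^ 2 - q.1 ^ 2 - q.2 ^ 2)

open Set Filter Topology

/-!
Every `p_μ` has the form `μ · a(q) · e^{μ w(q)}` with `a ≥ 0`, so `√(p_μ p_ν) = (√(μν) / m) · p_m`
for the mean rate `m = (μ + ν) / 2`. The Hellinger integral is therefore a combination of the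
masses `∫_D p_μ = 1 - e^{-μΔ}`, computed in polar coordinates followed by the substitution
`s = √(c²Δ² - r²)`, which turns `r dr / √(c²Δ² - r²)` into `ds`. With `μ = λ + h`, `ν = λ` the
second difference of `μ ↦ 1 - e^{-μΔ}` contributes `-Δ² e^{-λΔ} / 4` to the limit, and the AM-GM
gap `1 - √(μν) / m = (μ - ν)² / ((μ + ν)(μ + ν + 2√(μν)))` contributes `(1 - e^{-λΔ}) / (4λ²)`.
-/

theorem setIntegral_disc_comp_sq_add_sq {b : ℝ} (hb : 0 ≤ b) (f : ℝ → ℝ) :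
    ∫ q in {q : ℝ × ℝ | q.1 ^ 2 + q.2 ^ 2 < b ^ 2}, f (q.1 ^ 2 + q.2 ^ 2)
      = 2 * π * ∫ r in Ioo 0 b, r * f (r ^ 2) := by
  have hdisc : MeasurableSet {q : ℝ × ℝ | q.1 ^ 2 + q.2 ^ 2 < b ^ 2} :=
    measurableSet_lt (by fun_prop) measurable_const
  have hpolar : ∀ p ∈ polarCoord.target,
      p.1 • {q : ℝ × ℝ | q.1 ^ 2 + q.2 ^ 2 < b ^ 2}.indicator
          (fun q => f (q.1 ^ 2 + q.2 ^ 2)) (polarCoord.symm p)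
        = (Ioo 0 b).indicator (fun r => r * f (r ^ 2)) p.1 * 1 := by
    rintro ⟨r, θ⟩ ⟨hr, -⟩
    have hnorm : (r * cos θ) ^ 2 + (r * sin θ) ^ 2 = r ^ 2 := by
      linear_combination r ^ 2 * sin_sq_add_cos_sq θ
    have hmem : r ^ 2 < b ^ 2 ↔ r ∈ Ioo 0 b :=
      ⟨fun h => ⟨hr, (pow_lt_pow_iff_left₀ hr.le hb two_ne_zero).1 h⟩,
        fun h => pow_lt_pow_left₀ h.2 hr.le two_ne_zero⟩
    simp only [polarCoord_symm_apply, indicator, mem_ofPred_eq, hnorm, hmem, mul_one, smul_eq_mul]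
    split_ifs <;> simp
  rw [← integral_indicator hdisc, ← integral_comp_polarCoord_symm,
    setIntegral_congr_fun polarCoord.open_target.measurableSet hpolar,
    show polarCoord.target = Ioi (0 : ℝ) ×ˢ Ioo (-π) π from rfl, Measure.volume_eq_prod,
    setIntegral_prod_mul ((Ioo 0 b).indicator fun r => r * f (r ^ 2)) (fun _ => (1 : ℝ)),
    setIntegral_indicator measurableSet_Ioo,
    inter_eq_right.2 fun r hr => hr.1, setIntegral_const,
    volume_real_Ioo_of_le (by linarith [pi_pos]), smul_eq_mul]
  ring

theorem setIntegral_Ioo_mul_comp_sqrt_sub_sq {b : ℝ} (hb : 0 < b) (g : ℝ → ℝ) :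
    ∫ r in Ioo 0 b, r * (g √(b ^ 2 - r ^ 2) / √(b ^ 2 - r ^ 2)) = ∫ s in Ioo 0 b, g s := by
  set φ : ℝ → ℝ := fun s => √(b ^ 2 - s ^ 2)
  have hpos : ∀ s ∈ Ioo 0 b, 0 < b ^ 2 - s ^ 2 := fun s hs => by nlinarith [hs.1, hs.2]
  have hmaps : MapsTo φ (Ioo 0 b) (Ioo 0 b) := fun s hs =>
    ⟨sqrt_pos.2 (hpos s hs), (sqrt_lt' hb).2 (by nlinarith [hs.1])⟩
  have hinv : ∀ s ∈ Ioo 0 b, φ (φ s) = s := fun s hs => by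
    simp only [φ, sq_sqrt (hpos s hs).le, sub_sub_cancel, sqrt_sq hs.1.le]
  have hbij : BijOn φ (Ioo 0 b) (Ioo 0 b) := InvOn.bijOn ⟨hinv, hinv⟩ hmaps hmaps
  have hderiv : ∀ s ∈ Ioo 0 b, HasDerivWithinAt φ (-s / φ s) (Ioo 0 b) s := fun s hs => by
    have := ((hasDerivAt_pow 2 s).const_sub (b ^ 2)).sqrt (hpos s hs).ne'
    exact this.hasDerivWithinAt.congr_deriv (by simp only [φ]; field_simp; norm_num)
  have hsubst := integral_image_eq_integral_abs_deriv_smul measurableSet_Ioo hderiv hbij.injOn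
    fun r => r * (g (φ r) / φ r)
  rw [hbij.image_eq] at hsubst
  refine hsubst.trans (setIntegral_congr_fun measurableSet_Ioo fun s hs => ?_)
  have hφ : 0 < φ s := (hmaps hs).1
  have hs0 : s ≠ 0 := hs.1.ne'
  simp only [smul_eq_mul, hinv s hs, abs_div, abs_neg, abs_of_pos hs.1, abs_of_pos hφ]
  field_simp

theorem setIntegral_disc_comp_sqrt_div_sqrt {b : ℝ} (hb : 0 < b) (g : ℝ → ℝ) :
    ∫ q in {q : ℝ × ℝ | q.1 ^ 2 + q.2 ^ 2 < b ^ 2},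
        g √(b ^ 2 - (q.1 ^ 2 + q.2 ^ 2)) / √(b ^ 2 - (q.1 ^ 2 + q.2 ^ 2))
      = 2 * π * ∫ s in Ioo 0 b, g s :=
  (setIntegral_disc_comp_sq_add_sq hb.le fun t => g √(b ^ 2 - t) / √(b ^ 2 - t)).trans
    (congrArg _ (setIntegral_Ioo_mul_comp_sqrt_sub_sq hb g))

theorem setIntegral_Ioo_exp_mul {b k : ℝ} (hb : 0 ≤ b) (hk : k ≠ 0) :
    ∫ s in Ioo 0 b, exp (k * s) = (exp (k * b) - 1) / k := by
  rw [← integral_Ioc_eq_integral_Ioo, ← intervalIntegral.integral_of_le hb,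
    intervalIntegral.integral_comp_mul_left (fun s => exp s) hk, integral_exp, mul_zero, exp_zero,
    smul_eq_mul, inv_mul_eq_div]

theorem sqrt_mul_exp_mul_sqrt_mul_exp {a w μ ν : ℝ} (ha : 0 ≤ a) (hμ : 0 ≤ μ) (hν : 0 ≤ ν) :
    √(μ * a * exp (μ * w)) * √(ν * a * exp (ν * w))
      = √(μ * ν) / ((μ + ν) / 2) * ((μ + ν) / 2 * a * exp ((μ + ν) / 2 * w)) := by
  rcases (add_nonneg hμ hν).eq_or_lt with hsum | hsum
  · obtain ⟨rfl, rfl⟩ : μ = 0 ∧ ν = 0 := ⟨by linarith, by linarith⟩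
    simp
  have hexp : exp (μ * w) * exp (ν * w) = exp ((μ + ν) / 2 * w) ^ 2 := by
    rw [← exp_add, ← exp_nat_mul]; ring_nf
  rw [← sqrt_mul (by positivity), show μ * a * exp (μ * w) * (ν * a * exp (ν * w))
      = (μ * ν) * (a * exp ((μ + ν) / 2 * w)) ^ 2 by rw [mul_pow, ← hexp]; ring,
    sqrt_mul (by positivity), sqrt_sq (by positivity)]
  field_simp

section prfDensity

variable {c Δ μ ν : ℝ}

theorem prfDensity_eq_mul_exp (q : ℝ × ℝ) :
    prfDensity c Δ μ q = μ * (2 * π * c * √(c ^ 2 * Δ ^ 2 - q.1 ^ 2 - q.2 ^ 2))⁻¹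
      * exp (μ * (√(c ^ 2 * Δ ^ 2 - q.1 ^ 2 - q.2 ^ 2) / c - Δ)) := by
  rw [prfDensity]
  ring_nf

theorem prfDensity_nonneg (hc : 0 ≤ c) (hμ : 0 ≤ μ) (q : ℝ × ℝ) : 0 ≤ prfDensity c Δ μ q := by
  rw [prfDensity_eq_mul_exp]
  have := pi_pos
  positivity

theorem sqrt_prfDensity_mul_sqrt_prfDensity (hc : 0 ≤ c) (hμ : 0 ≤ μ) (hν : 0 ≤ ν)
    (q : ℝ × ℝ) :
    √(prfDensity c Δ μ q) * √(prfDensity c Δ ν q)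
      = √(μ * ν) / ((μ + ν) / 2) * prfDensity c Δ ((μ + ν) / 2) q := by
  simp only [prfDensity_eq_mul_exp]
  exact sqrt_mul_exp_mul_sqrt_mul_exp (by have := pi_pos; positivity) hμ hν

theorem setIntegral_prfDensity (hc : 0 < c) (hΔ : 0 < Δ) (hμ : μ ≠ 0) :
    ∫ q in {q : ℝ × ℝ | q.1 ^ 2 + q.2 ^ 2 < c ^ 2 * Δ ^ 2}, prfDensity c Δ μ q
      = 1 - exp (-μ * Δ) := by
  have hrepr : prfDensity c Δ μ = fun q => μ / (2 * π * c) * exp (-μ * Δ) *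
      (exp (μ / c * √((c * Δ) ^ 2 - (q.1 ^ 2 + q.2 ^ 2)))
        / √((c * Δ) ^ 2 - (q.1 ^ 2 + q.2 ^ 2))) := by
    ext q
    rw [prfDensity, exp_add]
    ring_nf
  rw [hrepr, ← mul_pow, integral_const_mul,
    setIntegral_disc_comp_sqrt_div_sqrt (by positivity) fun s => exp (μ / c * s),
    setIntegral_Ioo_exp_mul (by positivity) (div_ne_zero hμ hc.ne'),
    show μ / c * (c * Δ) = μ * Δ by field_simp, neg_mul, exp_neg]
  field_simp

theorem integrableOn_prfDensity (hc : 0 < c) (hΔ : 0 < Δ) (hμ : μ ≠ 0) :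
    IntegrableOn (prfDensity c Δ μ) {q : ℝ × ℝ | q.1 ^ 2 + q.2 ^ 2 < c ^ 2 * Δ ^ 2} := by
  -- the mass was computed without integrability, and non-integrable functions have integral `0`
  refine Integrable.of_integral_ne_zero ?_
  rw [setIntegral_prfDensity hc hΔ hμ, sub_ne_zero, ne_comm, Ne, exp_eq_one_iff]
  exact mul_ne_zero (neg_ne_zero.2 hμ) hΔ.ne'

theorem setIntegral_sq_sqrt_prfDensity_sub (hc : 0 < c) (hΔ : 0 < Δ) (hμ : 0 < μ) (hν : 0 < ν) :
    ∫ q in {q : ℝ × ℝ | q.1 ^ 2 + q.2 ^ 2 < c ^ 2 * Δ ^ 2},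
        (√(prfDensity c Δ μ q) - √(prfDensity c Δ ν q)) ^ 2
      = (1 - exp (-μ * Δ)) + (1 - exp (-ν * Δ))
        - 2 * (√(μ * ν) / ((μ + ν) / 2)) * (1 - exp (-((μ + ν) / 2) * Δ)) := by
  have hm : (μ + ν) / 2 ≠ 0 := by positivity
  have hpointwise : ∀ q, (√(prfDensity c Δ μ q) - √(prfDensity c Δ ν q)) ^ 2
      = prfDensity c Δ μ q + prfDensity c Δ ν q
        - 2 * (√(μ * ν) / ((μ + ν) / 2)) * prfDensity c Δ ((μ + ν) / 2) q := fun q => by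
    rw [sub_sq, sq_sqrt (prfDensity_nonneg hc.le hμ.le q),
      sq_sqrt (prfDensity_nonneg hc.le hν.le q),
      mul_assoc, sqrt_prfDensity_mul_sqrt_prfDensity hc.le hμ.le hν.le]
    ring
  simp_rw [hpointwise]
  have hint : ∀ {μ}, μ ≠ 0 → IntegrableOn (prfDensity c Δ μ) _ := integrableOn_prfDensity hc hΔ
  have hsum : IntegrableOn (fun q => prfDensity c Δ μ q + prfDensity c Δ ν q)
      {q : ℝ × ℝ | q.1 ^ 2 + q.2 ^ 2 < c ^ 2 * Δ ^ 2} := (hint hμ.ne').add (hint hν.ne')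
  rw [integral_sub hsum ((hint hm).const_mul _),
    integral_add (hint hμ.ne') (hint hν.ne'), integral_const_mul,
    setIntegral_prfDensity hc hΔ hμ.ne', setIntegral_prfDensity hc hΔ hν.ne',
    setIntegral_prfDensity hc hΔ hm]

end prfDensity

theorem one_sub_sqrt_mul_div_half_add {μ ν : ℝ} (hμ : 0 ≤ μ) (hν : 0 ≤ ν) (hμν : 0 < μ + ν) :
    1 - √(μ * ν) / ((μ + ν) / 2) = (μ - ν) ^ 2 / ((μ + ν) * (μ + ν + 2 * √(μ * ν))) := by
  have hsq : √(μ * ν) ^ 2 = μ * ν := sq_sqrt (mul_nonneg hμ hν)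
  have hpos : 0 < μ + ν + 2 * √(μ * ν) := by positivity
  field_simp
  linear_combination (-4 : ℝ) * hsq

theorem hellinger_closed_form_div_sq {Δ lam h : ℝ} (hlam : 0 < lam) (hh : h ≠ 0)
    (hlh : 0 < lam + h) :
    1 / h ^ 2 * ((1 - exp (-(lam + h) * Δ)) + (1 - exp (-lam * Δ))
        - 2 * (√((lam + h) * lam) / ((lam + h + lam) / 2)) * (1 - exp (-((lam + h + lam) / 2) * Δ)))
      = -exp (-lam * Δ) * ((exp (-h * (Δ / 2)) - 1) / h) ^ 2
        + 2 * (1 - exp (-(lam + h / 2) * Δ))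
          / ((2 * lam + h) * (2 * lam + h + 2 * √((lam + h) * lam))) := by
  have hgap := one_sub_sqrt_mul_div_half_add hlh.le hlam.le (by linarith)
  rw [show lam + h - lam = h by ring, show lam + h + lam = 2 * lam + h by ring] at hgap
  have hmean : √((lam + h) * lam) / ((2 * lam + h) / 2)
      = 1 - h ^ 2 / ((2 * lam + h) * (2 * lam + h + 2 * √((lam + h) * lam))) := by
    linarith
  have hexp₁ : exp (-(lam + h) * Δ) = exp (-lam * Δ) * exp (-h * (Δ / 2)) ^ 2 := by
    rw [← exp_nat_mul, ← exp_add]; ring_nf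
  have hexp₂ : exp (-((2 * lam + h) / 2) * Δ) = exp (-lam * Δ) * exp (-h * (Δ / 2)) := by
    rw [← exp_add]; ring_nf
  have hexp₃ : exp (-(lam + h / 2) * Δ) = exp (-lam * Δ) * exp (-h * (Δ / 2)) := by
    rw [← exp_add]; ring_nf
  rw [show lam + h + lam = 2 * lam + h by ring, hmean, hexp₁, hexp₂, hexp₃]
  field_simp
  ring

theorem tendsto_hellinger_closed_form_div_sq (Δ : ℝ) {lam : ℝ} (hlam : 0 < lam) :
    Tendsto (fun h => -exp (-lam * Δ) * ((exp (-h * (Δ / 2)) - 1) / h) ^ 2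
        + 2 * (1 - exp (-(lam + h / 2) * Δ))
          / ((2 * lam + h) * (2 * lam + h + 2 * √((lam + h) * lam))))
      (𝓝[≠] 0) (𝓝 ((1 / lam ^ 2 * (1 - exp (-lam * Δ) * (1 + lam ^ 2 * Δ ^ 2))) / 4)) := by
  have hslope : Tendsto (fun h => (exp (-h * (Δ / 2)) - 1) / h) (𝓝[≠] 0) (𝓝 (-(Δ / 2))) := by
    have hderiv : HasDerivAt (fun h => exp (-h * (Δ / 2))) (-(Δ / 2)) 0 := by
      simpa using ((hasDerivAt_id (0 : ℝ)).neg.mul_const (Δ / 2)).exp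
    simpa [div_eq_inv_mul] using hasDerivAt_iff_tendsto_slope_zero.1 hderiv
  have hcont : ContinuousAt (fun h => 2 * (1 - exp (-(lam + h / 2) * Δ))
      / ((2 * lam + h) * (2 * lam + h + 2 * √((lam + h) * lam)))) 0 :=
    ContinuousAt.div (by fun_prop) (by fun_prop) (by positivity)
  convert ((hslope.pow 2).const_mul _).add (hcont.tendsto.mono_left nhdsWithin_le_nhds) using 2
  rw [zero_div, add_zero, add_zero, sqrt_mul_self hlam.le]
  field_simp
  ring

/-- Quadratic Hellinger expansion (proof of Lemma 4.1(ii)):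
`(1/h²) ∬_D (√p_{λ+h} − √p_λ)² → I(λ)/4` as `h → 0`, where
`I(λ) = (1/λ²)(1 − e^{−λΔ}(1 + λ²Δ²))` is the Fisher information. -/
theorem hellinger_quadratic_expansion (c Δ lam : ℝ)
    (hc : 0 < c) (hΔ : 0 < Δ) (hlam : 0 < lam) :
    Filter.Tendsto
      (fun h : ℝ => (1 / h ^ 2) *
        ∫ q in {q : ℝ × ℝ | q.1 ^ 2 + q.2 ^ 2 < c ^ 2 * Δ ^ 2},
          (Real.sqrt (prfDensity c Δ (lam + h) q) - Real.sqrt (prfDensity c Δ lam q)) ^ 2)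
      (nhdsWithin 0 {h : ℝ | h ≠ 0 ∧ 0 < lam + h})
      (nhds ((1 / lam ^ 2 * (1 - Real.exp (-lam * Δ) * (1 + lam ^ 2 * Δ ^ 2))) / 4)) := by
  refine ((tendsto_hellinger_closed_form_div_sq Δ hlam).mono_left
    (nhdsWithin_mono 0 fun h hh => hh.1)).congr' ?_
  filter_upwards [self_mem_nhdsWithin] with h ⟨hh, hlh⟩
  rw [setIntegral_sq_sqrt_prfDensity_sub hc hΔ hlh hlam, hellinger_closed_form_div_sq hlam hh hlh]
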